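/- arXiv:0805.2599 — 2 statements merged into one kernel-verified Lean document; each statement's English description precedes it below -/
import Mathlib

section
/- Let V be a real inner product space, T a totally symmetric trilinear form on V, C(X) := Tr(Y ↦ T♯(X,Y)) its trace form where g(T♯(X,Y),Z) = T(X,Y,Z), and ζ ∈ V with T(ζ,·,·) = 0. If T has the quasi-C-reducible form T(X,Y,Z) = A(X,Y)C(Z) + A(Y,Z)C(X) + A(Z,X)C(Y) for a symmetric bilinear form A with A(ζ,ζ) ≠ 0, then C = 0 and hence T = 0. -/
open scoped RealInnerProductSpace

def IsQuasiCReducible {V R : Type*} [CommRing R] (T : V → V → V → R) (A : V → V → R)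
    (C : V → R) : Prop :=
  ∀ X Y Z, T X Y Z = A X Y * C Z + A Y Z * C X + A Z X * C Y

namespace IsQuasiCReducible

variable {V R : Type*} [CommRing R] {T : V → V → V → R} {A : V → V → R} {C : V → R}

theorem eq_zero_of_forall_eq_zero (h : IsQuasiCReducible T A C) (hC : ∀ X, C X = 0)
    (X Y Z : V) : T X Y Z = 0 := by
  simp [h X Y Z, hC]

/-- Evaluating at `(ζ, X, ζ)` leaves only the term `A(ζ,ζ) C(X)`. -/
theorem eq_zero_of_apply_left_eq_zero [NoZeroDivisors R] (h : IsQuasiCReducible T A C)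
    {ζ : V} (hTζ : ∀ X, T ζ X ζ = 0) (hCζ : C ζ = 0) (hAζ : A ζ ζ ≠ 0) (X : V) :
    C X = 0 := by
  have hζXζ : A ζ ζ * C X = 0 := by simpa [hTζ, hCζ] using (h ζ X ζ).symm
  exact (mul_eq_zero.mp hζXζ).resolve_left hAζ

end IsQuasiCReducible

theorem LinearMap.trace_eq_zero_of_forall_inner_eq_zero {V : Type*} [NormedAddCommGroup V]
    [InnerProductSpace ℝ V] (f : V →ₗ[ℝ] V) (hf : ∀ Y Z, ⟪f Y, Z⟫ = 0) :
    LinearMap.trace ℝ V f = 0 := by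
  have : f = 0 := LinearMap.ext fun Y => ext_inner_right ℝ fun Z => by simp [hf]
  simp [this]

theorem statement15_general {V : Type*} [NormedAddCommGroup V] [InnerProductSpace ℝ V]
    (T : V → V → V → ℝ)
    (Tsharp : V → V →ₗ[ℝ] V)
    (hTsharp : ∀ X Y Z, ⟪Tsharp X Y, Z⟫ = T X Y Z)
    (C : V → ℝ) (hC : ∀ X, C X = LinearMap.trace ℝ V (Tsharp X))
    (A : V → V → ℝ)
    (ζ : V) (hTζ : ∀ Y Z, T ζ Y Z = 0)
    (hred : ∀ X Y Z, T X Y Z = A X Y * C Z + A Y Z * C X + A Z X * C Y)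
    (hAζ : A ζ ζ ≠ 0) :
    (∀ X, C X = 0) ∧ ∀ X Y Z, T X Y Z = 0 := by
  have hCζ : C ζ = 0 := by
    rw [hC]
    exact (Tsharp ζ).trace_eq_zero_of_forall_inner_eq_zero fun Y Z => by rw [hTsharp, hTζ]
  have hC0 := IsQuasiCReducible.eq_zero_of_apply_left_eq_zero hred (fun X => hTζ X ζ) hCζ hAζ
  exact ⟨hC0, IsQuasiCReducible.eq_zero_of_forall_eq_zero hred hC0⟩

/-- if `T` is totally symmetric with trace form
`C(X) = Tr(Y ↦ T♯(X,Y))`, `T(ζ,·,·) = 0`, and `T` is quasi-C-reducible: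
`T(X,Y,Z) = A(X,Y)C(Z) + A(Y,Z)C(X) + A(Z,X)C(Y)` with `A` symmetric and
`A(ζ,ζ) ≠ 0`, then `C = 0` and hence `T = 0`. -/
theorem statement15 {V : Type*} [NormedAddCommGroup V] [InnerProductSpace ℝ V]
    [FiniteDimensional ℝ V]
    (T : V → V → V → ℝ)
    (hTs1 : ∀ X Y Z, T X Y Z = T Y X Z) (hTs2 : ∀ X Y Z, T X Y Z = T X Z Y)
    (Tsharp : V → V →ₗ[ℝ] V)
    (hTsharp : ∀ X Y Z, ⟪Tsharp X Y, Z⟫ = T X Y Z)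
    (C : V → ℝ) (hC : ∀ X, C X = LinearMap.trace ℝ V (Tsharp X))
    (A : V → V → ℝ) (hA : ∀ X Y, A X Y = A Y X)
    (ζ : V) (hTζ : ∀ Y Z, T ζ Y Z = 0)
    (hred : ∀ X Y Z, T X Y Z = A X Y * C Z + A Y Z * C X + A Z X * C Y)
    (hAζ : A ζ ζ ≠ 0) :
    (∀ X, C X = 0) ∧ ∀ X Y Z, T X Y Z = 0 :=
  statement15_general T Tsharp hTsharp C hC A ζ hTζ hred hAζ
end

section
/- Let V be an n-dimensional real inner product space (n ≥ 3), η ∈ V with g(η,η) = L² > 0, ℏ the angular metric of η, T a totally symmetric trilinear form with associated trace form C and C² := C(C♯) ≠ 0 where g(C♯,X) = C(X). Suppose T is semi-C-reducible: T(X,Y,Z) = (μ/(n+1))[ℏ(X,Y)C(Z) + ℏ(Y,Z)C(X) + ℏ(Z,X)C(Y)] + (τ/C²)C(X)C(Y)C(Z) with μ + τ = 1. If ζ ∈ V satisfies T(ζ,·,·) = 0, C(ζ) = 0, and ℏ(ζ,ζ) ≠ 0, then μ = 0, i.e., T(X,Y,Z) = C(X)C(Y)C(Z)/C² (T is C₂-like).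 -/
open scoped RealInnerProductSpace

theorem statement16_general {V : Type*}
    (n : ℕ)
    (hbar : V → V → ℝ)
    (T : V → V → V → ℝ)
    (C : V → ℝ)
    (Csharp : V)
    (C2 : ℝ) (hC2 : C2 = C Csharp) (hC2ne : C2 ≠ 0)
    (μ τ : ℝ) (hμτ : μ + τ = 1)
    (hred : ∀ X Y Z, T X Y Z = (μ / (n + 1 : ℝ)) *
        (hbar X Y * C Z + hbar Y Z * C X + hbar Z X * C Y)
      + (τ / C2) * (C X * C Y * C Z))
    (ζ : V) (hTζ : ∀ Y Z, T ζ Y Z = 0) (hCζ : C ζ = 0) (hhζ : hbar ζ ζ ≠ 0) :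
    μ = 0 ∧ ∀ X Y Z, T X Y Z = C X * C Y * C Z / C2 := by
  -- At `(ζ, ζ, C♯)` every term but `μ/(n+1) ℏ(ζ,ζ) C²` vanishes.
  have hμ : μ = 0 := by
    have h := hred ζ ζ Csharp
    rw [hTζ, hCζ, ← hC2] at h
    have hn1 : (n : ℝ) + 1 ≠ 0 := by positivity
    simpa [hn1, hhζ, hC2ne] using h.symm
  have hτ : τ = 1 := by linarith
  refine ⟨hμ, fun X Y Z => ?_⟩
  rw [hred X Y Z, hμ, hτ]
  ring

/-- if `T` is semi-C-reducible with `μ + τ = 1`, `C² = C(C♯) ≠ 0`,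
and `ζ` satisfies `T(ζ,·,·) = 0`, `C(ζ) = 0`, `ℏ(ζ,ζ) ≠ 0`, then `μ = 0`,
i.e. `T(X,Y,Z) = C(X)C(Y)C(Z)/C²` (C₂-like). -/
theorem statement16 {V : Type*} [NormedAddCommGroup V] [InnerProductSpace ℝ V]
    [FiniteDimensional ℝ V]
    (n : ℕ) (hn : n = Module.finrank ℝ V) (hn3 : 3 ≤ n)
    (η : V) (L : ℝ) (hL : 0 < L ^ 2) (hη : ⟪η, η⟫ = L ^ 2)
    (hbar : V → V → ℝ)
    (hhbar : ∀ X Y, hbar X Y = ⟪X, Y⟫ - ⟪X, η⟫ * ⟪Y, η⟫ / L ^ 2)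
    (T : V → V → V → ℝ)
    (hTs1 : ∀ X Y Z, T X Y Z = T Y X Z) (hTs2 : ∀ X Y Z, T X Y Z = T X Z Y)
    (Tsharp : V → V →ₗ[ℝ] V)
    (hTsharp : ∀ X Y Z, ⟪Tsharp X Y, Z⟫ = T X Y Z)
    (C : V → ℝ) (hC : ∀ X, C X = LinearMap.trace ℝ V (Tsharp X))
    (Csharp : V) (hCsharp : ∀ X, ⟪Csharp, X⟫ = C X)
    (C2 : ℝ) (hC2 : C2 = C Csharp) (hC2ne : C2 ≠ 0)
    (μ τ : ℝ) (hμτ : μ + τ = 1)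
    (hred : ∀ X Y Z, T X Y Z = (μ / (n + 1 : ℝ)) *
        (hbar X Y * C Z + hbar Y Z * C X + hbar Z X * C Y)
      + (τ / C2) * (C X * C Y * C Z))
    (ζ : V) (hTζ : ∀ Y Z, T ζ Y Z = 0) (hCζ : C ζ = 0) (hhζ : hbar ζ ζ ≠ 0) :
    μ = 0 ∧ ∀ X Y Z, T X Y Z = C X * C Y * C Z / C2 :=
  statement16_general n hbar T C Csharp C2 hC2 hC2ne μ τ hμτ hred ζ hTζ hCζ hhζ
end
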